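/- (Small-noise preservation of mutual information ordering under the M-ary symmetric channel.) Let X_k, X_ℓ, X_m, X_r be four distinct discrete random variables taking values in [M], each with uniform marginal distribution on [M], and suppose I(X_k; X_ℓ) < I(X_m; X_r). Let Y_k, Y_ℓ, Y_m, Y_r be their outputs through the M-ary symmetric channel with common crossover probability q (applied independently to each coordinate). Then there exists q_0 > 0 such that for all q ∈ (0, q_0], I(Y_k; Y_ℓ) < I(Y_m; Y_r). -/
import Mathlib


open scoped Classical

noncomputable section

namespace NoisyChannels

/-- Shannon entropy (base 2) of a pmf on a finite alphabet,
with the convention `0 · log 0 = 0`. -/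
def entF {α : Type*} [Fintype α] (f : α → ℝ) : ℝ :=
  -∑ a, f a * Real.logb 2 (f a)

/-- Left marginal of a joint pmf. -/
def margL {α β : Type*} [Fintype β] (f : α × β → ℝ) : α → ℝ :=
  fun a => ∑ b, f (a, b)

/-- Right marginal of a joint pmf. -/
def margR {α β : Type*} [Fintype α] (f : α × β → ℝ) : β → ℝ :=
  fun b => ∑ a, f (a, b)

/-- Mutual information (base 2) of the pair with joint pmf `f`:
`I(X; Y) = H(X) + H(Y) − H(X, Y)`. -/
def miF {α β : Type*} [Fintype α] [Fintype β] (f : α × β → ℝ) : ℝ :=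
  entF (margL f) + entF (margR f) - entF f

/-- `f` is a pmf on a finite alphabet. -/
def IsPmfF {α : Type*} [Fintype α] (f : α → ℝ) : Prop :=
  (∀ a, 0 ≤ f a) ∧ ∑ a, f a = 1

/-- Probability mass of the Bernoulli random indicator with success probability `q`. -/
def bern (q : ℝ) : Bool → ℝ := fun b => if b then q else 1 - q

/-- The joint pmf of a pair of outputs of the `M`-ary symmetric channel with
crossover probability `q`, given the joint input pmf `f`:
`p_†(y) = (1−q)² f(y) + (1 − (1−q)²)/M²`. -/
def symOut (M : ℕ) (q : ℝ) (f : Fin M × Fin M → ℝ) : Fin M × Fin M → ℝ :=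
  fun y => (1 - q) ^ 2 * f y + (1 - (1 - q) ^ 2) / (M : ℝ) ^ 2

lemma cont_entF {α : Type*} [Fintype α] : Continuous fun f : α → ℝ => entF f := by
  unfold entF
  apply Continuous.neg
  apply continuous_finset_sum
  intro a _
  have h : (fun f : α → ℝ => f a * Real.logb 2 (f a)) =
      fun f : α → ℝ => (f a * Real.log (f a)) * (Real.log 2)⁻¹ := by
    funext f; rw [Real.logb]; ring
  rw [h]
  exact (Real.continuous_mul_log.comp (continuous_apply a)).mul continuous_const

lemma cont_miF {α β : Type*} [Fintype α] [Fintype β] :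
    Continuous fun f : α × β → ℝ => miF f := by
  unfold miF margL margR
  refine (Continuous.add ?_ ?_).sub cont_entF
  · exact cont_entF.comp
      (continuous_pi fun a => continuous_finset_sum _ fun b _ => continuous_apply (a, b))
  · exact cont_entF.comp
      (continuous_pi fun b => continuous_finset_sum _ fun a _ => continuous_apply (a, b))

lemma cont_symOut (M : ℕ) (f : Fin M × Fin M → ℝ) :
    Continuous fun q : ℝ => symOut M q f := by
  unfold symOut
  exact continuous_pi fun y => by fun_prop

lemma symOut_zero (M : ℕ) (f : Fin M × Fin M → ℝ) : symOut M 0 f = f := by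
  funext y; simp [symOut]

/-- **Small-noise preservation of the mutual information ordering under the
M-ary symmetric channel.**  Let `(X_k, X_ℓ)` and `(X_m, X_r)` be pairs of inputs
with uniform marginals on `[M]` and `I(X_k; X_ℓ) < I(X_m; X_r)`.  Then there is a
`q₀ > 0` such that for all crossover probabilities `q ∈ (0, q₀]`, the channel
outputs satisfy `I(Y_k; Y_ℓ) < I(Y_m; Y_r)`. -/
theorem mi_ordering_preserved_small_noise
    (M : ℕ) (hM : 0 < M)
    (pKL pMR : Fin M × Fin M → ℝ) (hKL : IsPmfF pKL) (hMR : IsPmfF pMR)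
    (hunifKL : ∀ a : Fin M, margL pKL a = 1 / (M : ℝ) ∧ margR pKL a = 1 / (M : ℝ))
    (hunifMR : ∀ a : Fin M, margL pMR a = 1 / (M : ℝ) ∧ margR pMR a = 1 / (M : ℝ))
    (hI : miF pKL < miF pMR) :
    ∃ q0 : ℝ, 0 < q0 ∧ ∀ q : ℝ, 0 < q → q ≤ q0 →
      miF (symOut M q pKL) < miF (symOut M q pMR) := by
  set F : ℝ → ℝ := fun q => miF (symOut M q pMR) - miF (symOut M q pKL) with hF
  have hFc : Continuous F :=
    (cont_miF.comp (cont_symOut M pMR)).sub (cont_miF.comp (cont_symOut M pKL))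
  have hF0 : 0 < F 0 := by
    simp only [hF, symOut_zero]
    linarith
  have hopen : IsOpen (F ⁻¹' Set.Ioi 0) := isOpen_Ioi.preimage hFc
  obtain ⟨ε, hε, hball⟩ := Metric.isOpen_iff.1 hopen 0 hF0
  refine ⟨ε / 2, by linarith, fun q hq hq2 => ?_⟩
  have : q ∈ F ⁻¹' Set.Ioi 0 := by
    apply hball
    simp only [Metric.mem_ball, Real.dist_eq, sub_zero, abs_of_pos hq]
    linarith
  have : 0 < F q := this
  simp only [hF] at this
  linarith

end NoisyChannels
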